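/- Let (R,<,+) be a divisible ordered abelian group and let X ⊆ R be a nonempty definable set. Suppose every maximal convex subset of X has 'length' less than ε/2 (i.e., for all y₁, y₂ in a common maximal convex subset of X, |y₁ − y₂| < ε/2), and suppose that for every x ∈ X, (x − 2ε, x + 2ε) ∩ X ⊆ D(X,x). If x, x' ∈ X, z ∈ D(X,x), z' ∈ D(X,x'), e, e' ∈ R with |e − e'| < ε and z + e = z' + e', then D(X,x) = D(X,x'). -/

import Mathlib

/-- A convex subset of a linear order. -/
def IsConvexSet {R : Type*} [LinearOrder R] (C : Set R) : Prop :=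
  ∀ a ∈ C, ∀ b ∈ C, ∀ c, a ≤ c → c ≤ b → c ∈ C

/-- The maximal convex subset of `X` containing `x`. -/
def Dconv {R : Type*} [LinearOrder R] (X : Set R) (x : R) : Set R :=
  ⋃₀ {C | C ⊆ X ∧ IsConvexSet C ∧ x ∈ C}

lemma Dconv_subset {R : Type*} [LinearOrder R] (X : Set R) (x : R) :
    Dconv X x ⊆ X := fun _ ⟨_, ⟨hC, _, _⟩, hy⟩ => hC hy

lemma mem_Dconv_self {R : Type*} [LinearOrder R] {X : Set R} {x : R} (hx : x ∈ X) :
    x ∈ Dconv X x :=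
  ⟨{x}, ⟨by simpa, fun a ha b hb c hac hcb => by
    simp only [Set.mem_singleton_iff] at *; subst ha hb; exact le_antisymm hcb hac, rfl⟩, rfl⟩

lemma Dconv_convex {R : Type*} [LinearOrder R] (X : Set R) (x : R) :
    IsConvexSet (Dconv X x) := by
  rintro a ⟨A, ⟨hAX, hAc, hxA⟩, haA⟩ b ⟨B, ⟨hBX, hBc, hxB⟩, hbB⟩ c hac hcb
  refine ⟨A ∪ B, ⟨Set.union_subset hAX hBX, ?_, Or.inl hxA⟩, ?_⟩
  · rintro p hp q hq r hpr hrq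
    rcases hp with hp | hp <;> rcases hq with hq | hq
    · exact Or.inl (hAc p hp q hq r hpr hrq)
    · rcases le_total r x with h | h
      · exact Or.inl (hAc p hp x hxA r hpr h)
      · exact Or.inr (hBc x hxB q hq r h hrq)
    · rcases le_total r x with h | h
      · exact Or.inr (hBc p hp x hxB r hpr h)
      · exact Or.inl (hAc x hxA q hq r h hrq)
    · exact Or.inr (hBc p hp q hq r hpr hrq)
  · rcases le_total c x with h | h
    · exact Or.inl (hAc a haA x hxA c hac h)
    · exact Or.inr (hBc x hxB b hbB c h hcb)

lemma Dconv_eq_of_mem {R : Type*} [LinearOrder R] {X : Set R} {a b : R}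
    (ha : a ∈ X) (hb : b ∈ Dconv X a) : Dconv X a = Dconv X b := by
  have hbX : b ∈ X := Dconv_subset X a hb
  have h1 : Dconv X a ⊆ Dconv X b := fun y hy =>
    ⟨Dconv X a, ⟨Dconv_subset X a, Dconv_convex X a, hb⟩, hy⟩
  have h2 : a ∈ Dconv X b := h1 (mem_Dconv_self ha)
  exact Set.Subset.antisymm h1 fun y hy =>
    ⟨Dconv X b, ⟨Dconv_subset X b, Dconv_convex X b, h2⟩, hy⟩

/-- in a divisible ordered abelian group, if every maximal convex
component of `X` has diameter `< ε/2` while points of `X` within `2ε` of each other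
lie in the same component, then `z + e = z' + e'` with `|e − e'| < ε` forces the
components of `z` and `z'` to coincide. (`ε/2` is expressed as `2 • d < ε`.) -/
theorem stmt_14 {R : Type*} [AddCommGroup R] [LinearOrder R] [IsOrderedAddMonoid R] [DivisibleBy R ℕ]
    (X : Set R) (hne : X.Nonempty) (ε : R) (hε : 0 < ε)
    (hsmall : ∀ x ∈ X, ∀ y₁ ∈ Dconv X x, ∀ y₂ ∈ Dconv X x, 2 • |y₁ - y₂| < ε)
    (hsep : ∀ x ∈ X, ∀ w ∈ X, x - (ε + ε) < w → w < x + (ε + ε) → w ∈ Dconv X x)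
    (x x' : R) (hx : x ∈ X) (hx' : x' ∈ X)
    (z : R) (hz : z ∈ Dconv X x) (z' : R) (hz' : z' ∈ Dconv X x')
    (e e' : R) (hee' : |e - e'| < ε) (heq : z + e = z' + e') :
    Dconv X x = Dconv X x' := by
  have hzX : z ∈ X := Dconv_subset X x hz
  have hz'X : z' ∈ X := Dconv_subset X x' hz'
  have hdiff : z - z' = e' - e := by
    rw [sub_eq_sub_iff_add_eq_add, heq, add_comm]
  have habs : |z - z'| < ε := by
    rw [hdiff, abs_sub_comm]; exact hee'
  have hεε : ε < ε + ε := lt_add_of_pos_left ε hε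
  have h1 : z - (ε + ε) < z' :=
    lt_of_lt_of_le (sub_lt_sub_left hεε z) (sub_lt_comm.mp (lt_of_abs_lt habs)).le
  have h2 : z' < z + (ε + ε) := by
    have hz'b : z' < z + ε := by
      have := neg_lt_of_abs_lt habs
      rw [neg_lt_sub_iff_lt_add, add_comm] at this
      exact this
    exact hz'b.trans (add_lt_add_right hεε z)
  have key : z' ∈ Dconv X z := hsep z hzX z' hz'X h1 h2
  rw [Dconv_eq_of_mem hx hz, Dconv_eq_of_mem hzX key, Dconv_eq_of_mem hx' hz']
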